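/- Any deterministic algorithm solving size discovery on all radio networks of size at most n, using labeling schemes in which every label is a binary string of length less than (1/4)·log₂ n, must run for Ω(log² n) rounds on some network; specifically, assuming the existence of bipartite graphs H_m with sides of size m whose every bipartite broadcast schedule has size > c·log² m, no algorithm with such labels can always terminate within (c/2)·log² n rounds. -/

import Mathlib

attribute [local instance] Classical.propDecidable

/-- The communication history of each node after `t` rounds in the radio model
**without collision detection**: each round a node records `some m` if it listens and
exactly one of its neighbors transmits (with message `m`), and `none` otherwise (own
transmission, collision, or silence). The deterministic algorithm `step` maps a node's
label and current history to `some m` = "transmit `m`" or `none` = "listen". -/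
noncomputable def hist17 {V : Type*} (G : SimpleGraph V) (L : V → List Bool)
    (step : List Bool → List (Option (List Bool)) → Option (List Bool)) :
    ℕ → V → List (Option (List Bool))
  | 0, _ => []
  | t + 1, v =>
    let H : V → List (Option (List Bool)) := hist17 G L step t
    let tx : V → Prop := fun u => (step (L u) (H u)).isSome
    let ev : Option (List Bool) :=
      if tx v then none
      else if h : ∃! u, G.Adj v u ∧ tx u then step (L h.exists.choose) (H h.exists.choose)
      else none
    H v ++ [ev]

/-- `H` is bipartite with sides the left and right copies of `Fin m`: every edge joins
a left vertex to a right vertex. -/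
def Bipartite17 {m : ℕ} (H : SimpleGraph (Fin m ⊕ Fin m)) : Prop :=
  ∀ x y, H.Adj x y → (x.isLeft ∧ y.isRight) ∨ (x.isRight ∧ y.isLeft)

/-- A bipartite broadcast schedule of size `k` for `H`: a sequence `Us 0, …, Us (k-1)`
of subsets of the left side such that every right vertex has, in some round `i < k`,
exactly one neighbor in `Us i`. -/
def IsSchedule17 {m : ℕ} (H : SimpleGraph (Fin m ⊕ Fin m)) (k : ℕ)
    (Us : ℕ → Set (Fin m)) : Prop :=
  ∀ v : Fin m, ∃ i < k, ∃! u : Fin m, H.Adj (Sum.inl u) (Sum.inr v) ∧ u ∈ Us i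

/-! For `m = n / 8` and each `i < m`, attach to the left side of `H_{m+i+1}` a source adjacent
to every left vertex; this gives a connected network on `2(m+i+1)+1 ≤ n` vertices. Since `T`
is below the schedule bound for `H_{m+i+1}`, the sets of left vertices transmitting in rounds
`0, …, T-1` do not form a bipartite broadcast schedule, so some right vertex, whose neighbours
are all on the left, never hears a message: its history is `T` silences and its output is a
function of its label alone. Fewer than `m` labels are short enough, so two of these networks,
of different sizes, contain equally labelled silent vertices that must give the same answer. -/

theorem Function.Injective.existsUnique_iff {α β : Type*} {f : α → β} (hf : f.Injective)
    {p : β → Prop} (hp : ∀ b, p b → b ∈ Set.range f) : (∃! b, p b) ↔ ∃! a, p (f a) := by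
  constructor
  · rintro ⟨b, hb, huniq⟩
    obtain ⟨a, rfl⟩ := hp b hb
    exact ⟨a, hb, fun a' ha' => hf (huniq _ ha')⟩
  · rintro ⟨a, ha, huniq⟩
    refine ⟨f a, ha, fun b hb => ?_⟩
    obtain ⟨a', rfl⟩ := hp b hb
    rw [huniq a' hb]

theorem List.exists_ne_eq_of_length_lt {ι : Type*} [Fintype ι] (f : ι → List Bool) {N : ℕ}
    (hf : ∀ i, (f i).length < N) (hN : 2 ^ N ≤ Fintype.card ι) : ∃ i j, i ≠ j ∧ f i = f j := by
  let g : ι → Σ n : Fin N, List.Vector Bool n := fun i => ⟨⟨_, hf i⟩, ⟨f i, rfl⟩⟩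
  have hcard : Fintype.card (Σ n : Fin N, List.Vector Bool n) < Fintype.card ι := by
    calc Fintype.card (Σ n : Fin N, List.Vector Bool n)
        = ∑ n ∈ Finset.range N, 2 ^ n := by
          simp only [Fintype.card_sigma, card_vector, Fintype.card_bool, Fin.sum_univ_eq_sum_range]
      _ < 2 ^ N := Nat.geomSum_lt le_rfl fun _ => Finset.mem_range.mp
      _ ≤ Fintype.card ι := hN
  obtain ⟨i, j, hij, hg⟩ := Fintype.exists_ne_map_eq_of_card_lt g hcard
  exact ⟨i, j, hij, congrArg (fun x => x.2.toList) hg⟩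

theorem lt_log_sixteen_add_one_of_lt_logb {l n : ℕ} (hn : 0 < n)
    (hl : (l : ℝ) < Real.logb 2 n / 4) : l < Nat.log 16 n + 1 := by
  have h : (2 : ℝ) ^ ((4 * l : ℕ) : ℝ) < n :=
    (Real.lt_logb_iff_rpow_lt one_lt_two (by positivity)).mp (by push_cast; linarith)
  rw [Real.rpow_natCast, pow_mul] at h
  norm_num at h
  exact Nat.lt_succ_of_le (Nat.le_log_of_pow_le (by norm_num) (by exact_mod_cast h.le))

theorem two_pow_log_sixteen_add_one_le {n : ℕ} (hn : 4096 ≤ n) :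
    2 ^ (Nat.log 16 n + 1) ≤ n / 8 := by
  have hpow : 16 ^ Nat.log 16 n ≤ n := Nat.pow_log_le_self 16 (by omega)
  rw [← Nat.pow_le_pow_iff_left (by norm_num : 4 ≠ 0), ← pow_mul, mul_comm, pow_mul]
  have hm : 512 ≤ n / 8 := by omega
  calc (2 ^ 4) ^ (Nat.log 16 n + 1) = 16 * 16 ^ Nat.log 16 n := by ring
    _ ≤ 16 * n := by omega
    _ ≤ 512 ^ 3 * (n / 8) := by omega
    _ ≤ (n / 8) ^ 3 * (n / 8) := by gcongr
    _ = (n / 8) ^ 4 := by ring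

theorem logb_sq_le_two_mul_logb_sq {x y : ℝ} (hx : 4096 ≤ x) (hxy : x ≤ 8 * y) :
    Real.logb 2 x ^ 2 ≤ 2 * Real.logb 2 y ^ 2 := by
  have hx12 : 12 ≤ Real.logb 2 x := by
    rw [Real.le_logb_iff_rpow_le one_lt_two (by linarith)]
    norm_num; linarith
  have hy : Real.logb 2 x - 3 ≤ Real.logb 2 y := by
    have h8 : Real.logb 2 8 = 3 := by
      rw [show (8 : ℝ) = 2 ^ (3 : ℝ) by norm_num, Real.logb_rpow two_pos one_lt_two.ne']
    rw [← h8, ← Real.logb_div (by linarith) (by norm_num)]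
    exact Real.logb_le_logb_of_le one_lt_two (by positivity) (by linarith)
  nlinarith

section History

variable {V W : Type*} (G : SimpleGraph V) (L : V → List Bool)
  (step : List Bool → List (Option (List Bool)) → Option (List Bool))

def Transmits17 (t : ℕ) (u : V) : Prop :=
  (step (L u) (hist17 G L step t u)).isSome

theorem hist17_succ_of_not_existsUnique {t : ℕ} {v : V}
    (h : ¬∃! u, G.Adj v u ∧ Transmits17 G L step t u) :
    hist17 G L step (t + 1) v = hist17 G L step t v ++ [none] := by
  simp only [hist17]
  split_ifs with _ hu
  exacts [rfl, absurd hu h, rfl]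

theorem hist17_eq_replicate_none {T : ℕ} {v : V}
    (h : ∀ t < T, ¬∃! u, G.Adj v u ∧ Transmits17 G L step t u) :
    hist17 G L step T v = List.replicate T none := by
  induction T with
  | zero => rfl
  | succ t ih =>
    rw [hist17_succ_of_not_existsUnique G L step (h t t.lt_succ_self),
      ih fun s hs => h s (hs.trans t.lt_succ_self), List.replicate_succ']

theorem hist17_comp_iso {G' : SimpleGraph W} (φ : G ≃g G') (L : W → List Bool) (t : ℕ) :
    hist17 G (L ∘ φ) step t = hist17 G' L step t ∘ φ := by
  induction t with
  | zero => rfl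
  | succ t ih =>
    funext v
    show hist17 G (L ∘ φ) step (t + 1) v = hist17 G' L step (t + 1) (φ v)
    simp only [hist17, ih, Function.comp_apply]
    have hnbr : ∀ u, (G.Adj v u ∧ (step (L (φ u)) (hist17 G' L step t (φ u))).isSome) ↔
        (G'.Adj (φ v) (φ u) ∧ (step (L (φ u)) (hist17 G' L step t (φ u))).isSome) :=
      fun u => and_congr_left' φ.map_adj_iff.symm
    congr 2
    split_ifs with _ h h' h'
    · rfl
    · rw [h'.unique h'.exists.choose_spec ((hnbr _).mp h.exists.choose_spec)]
    · exact absurd ((φ.toEquiv.existsUnique_congr hnbr).mp h) h'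
    · exact absurd ((φ.toEquiv.existsUnique_congr hnbr).mpr h') h
    · rfl

end History

namespace SimpleGraph

variable {α : Type*} (H : SimpleGraph α) (S : Set α)

def attachSource : SimpleGraph (Option α) where
  Adj x y := match x, y with
    | some a, some b => H.Adj a b
    | none, some b => b ∈ S
    | some a, none => a ∈ S
    | none, none => False
  symm := ⟨by
    rintro (_ | a) (_ | b) h
    exacts [h, h, h, h.symm]⟩
  loopless := ⟨by
    rintro (_ | a) h
    exacts [h, H.loopless.irrefl a h]⟩

theorem attachSource_connected (hS : ∀ x, x ∈ S ∨ ∃ y ∈ S, H.Adj x y) :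
    (H.attachSource S).Connected := by
  have hreach : ∀ w, (H.attachSource S).Reachable none w := by
    rintro (_ | x)
    · rfl
    rcases hS x with hx | ⟨y, hy, hxy⟩
    · exact Adj.reachable (show (H.attachSource S).Adj none (some x) from hx)
    · exact (Adj.reachable (show (H.attachSource S).Adj none (some y) from hy)).trans
        (Adj.reachable (show (H.attachSource S).Adj (some y) (some x) from hxy.symm))
  exact (connected_iff _).mpr ⟨fun x y => (hreach x).symm.trans (hreach y), ⟨none⟩⟩

theorem exists_eq_some_of_attachSource_adj {x : α} (hx : x ∉ S) {w : Option α}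
    (h : (H.attachSource S).Adj (some x) w) : ∃ y, w = some y ∧ H.Adj x y := by
  cases w with
  | none => exact absurd h hx
  | some y => exact ⟨y, rfl, h⟩

end SimpleGraph

namespace Bipartite17

variable {m T : ℕ} {H : SimpleGraph (Fin m ⊕ Fin m)}

theorem exists_eq_inl_of_adj_inr (hH : Bipartite17 H) {v : Fin m} {y : Fin m ⊕ Fin m}
    (h : H.Adj (Sum.inr v) y) : ∃ u, y = Sum.inl u := by
  rcases hH _ _ h with ⟨hl, -⟩ | ⟨-, hl⟩
  · simp at hl
  · exact Sum.isLeft_iff.mp hl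

theorem attachSource_connected (hH : Bipartite17 H) (hiso : ∀ x, ∃ y, H.Adj x y) :
    (H.attachSource (Set.range Sum.inl)).Connected := by
  refine H.attachSource_connected _ fun x => ?_
  rcases x with u | v
  · exact Or.inl ⟨u, rfl⟩
  · obtain ⟨y, hy⟩ := hiso (Sum.inr v)
    obtain ⟨u, rfl⟩ := hH.exists_eq_inl_of_adj_inr hy
    exact Or.inr ⟨_, ⟨u, rfl⟩, hy⟩

theorem exists_silent_attachSource (hH : Bipartite17 H)
    (hT : ∀ Us, ¬IsSchedule17 H T Us)
    (step : List Bool → List (Option (List Bool)) → Option (List Bool))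
    (L : Option (Fin m ⊕ Fin m) → List Bool) :
    ∃ v, hist17 (H.attachSource (Set.range Sum.inl)) L step T v = List.replicate T none := by
  set G := H.attachSource (Set.range Sum.inl)
  by_contra! hloud
  refine hT (fun t => {u | Transmits17 G L step t (some (Sum.inl u))}) fun v => ?_
  refine not_not.mp fun hv => hloud (some (Sum.inr v))
    (hist17_eq_replicate_none G L step fun t ht hu => hv ⟨t, ht, ?_⟩)
  have hinj : Function.Injective (some ∘ Sum.inl : Fin m → Option (Fin m ⊕ Fin m)) :=
    (Option.some_injective _).comp Sum.inl_injective
  have hnbr : ∀ w, G.Adj (some (Sum.inr v)) w ∧ Transmits17 G L step t w →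
      w ∈ Set.range (some ∘ Sum.inl) := by
    rintro w ⟨hw, -⟩
    obtain ⟨y, rfl, hy⟩ := H.exists_eq_some_of_attachSource_adj _ (by simp) hw
    obtain ⟨u, rfl⟩ := hH.exists_eq_inl_of_adj_inr hy
    exact ⟨u, rfl⟩
  exact (existsUnique_congr fun u => and_congr_left' (H.adj_comm _ _)).mp
    ((hinj.existsUnique_iff hnbr).mp hu)

theorem exists_connected_silent (hH : Bipartite17 H) (hiso : ∀ x, ∃ y, H.Adj x y)
    (hT : ∀ Us, ¬IsSchedule17 H T Us) :
    ∃ G : SimpleGraph (Fin (2 * m + 1)), G.Connected ∧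
      ∀ step (L : Fin (2 * m + 1) → List Bool), ∃ v,
        hist17 G L step T v = List.replicate T none := by
  let e : Option (Fin m ⊕ Fin m) ≃ Fin (2 * m + 1) := Fintype.equivFinOfCardEq (by simp; omega)
  let φ := SimpleGraph.Iso.map e (H.attachSource (Set.range Sum.inl))
  refine ⟨_, φ.connected_iff.mp (hH.attachSource_connected hiso), fun step L => ?_⟩
  obtain ⟨v, hv⟩ := hH.exists_silent_attachSource hT step (L ∘ φ)
  exact ⟨φ v, by rw [← hv, hist17_comp_iso]; rfl⟩

end Bipartite17

/-- assuming (Alon–Bar-Noy–Linial–Peleg) that for all large `m` there is a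
bipartite graph with sides of size `m`, no isolated vertices, whose every bipartite
broadcast schedule has size `> c·log₂² m`, the following holds for all sufficiently
large `n`: no deterministic algorithm running in at most `(c/2)·log₂² n` rounds and
using labels of length `< (1/4)·log₂ n` can solve size discovery on all (connected)
radio networks of size at most `n`. -/
theorem stmt17 (c : ℝ) (hc : 0 < c)
    (hH : ∃ m₀ : ℕ, ∀ m : ℕ, m₀ ≤ m →
      ∃ H : SimpleGraph (Fin m ⊕ Fin m), Bipartite17 H ∧
        (∀ x, ∃ y, H.Adj x y) ∧
        (∀ (k : ℕ) (Us : ℕ → Set (Fin m)), IsSchedule17 H k Us →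
          c * (Real.logb 2 m) ^ 2 < k)) :
    ∃ n₀ : ℕ, ∀ n : ℕ, n₀ ≤ n →
      ∀ (step : List Bool → List (Option (List Bool)) → Option (List Bool))
        (out : List Bool → List (Option (List Bool)) → ℕ) (T : ℕ),
        (T : ℝ) ≤ c / 2 * (Real.logb 2 n) ^ 2 →
        ¬ (∀ k : ℕ, k ≤ n → ∀ G : SimpleGraph (Fin k), G.Connected →
            ∃ L : Fin k → List Bool,
              (∀ v, ((L v).length : ℝ) < Real.logb 2 n / 4) ∧
              (∀ v, out (L v) (hist17 G L step T v) = k)) := by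
  obtain ⟨m₀, hm₀⟩ := hH
  refine ⟨max (8 * m₀ + 8) 4096, fun n hn step out T hT hsolve => ?_⟩
  have hn4096 : 4096 ≤ n := le_of_max_le_right hn
  set m := n / 8
  have hsilent : ∀ i : Fin m, ∃ ℓ : List Bool, ℓ.length < Nat.log 16 n + 1 ∧
      out ℓ (List.replicate T none) = 2 * (m + i + 1) + 1 := by
    intro i
    obtain ⟨H, hbip, hiso, hsched⟩ := hm₀ (m + i + 1) (by omega)
    have hlog := logb_sq_le_two_mul_logb_sq (x := n) (y := ((m + i + 1 : ℕ) : ℝ))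
      (by exact_mod_cast hn4096) (by exact_mod_cast (by omega : n ≤ 8 * (m + i + 1)))
    have hT' : ∀ Us, ¬IsSchedule17 H T Us := fun Us hUs => by
      linarith [hsched T Us hUs, mul_le_mul_of_nonneg_left hlog hc.le]
    obtain ⟨G, hG, hsil⟩ := hbip.exists_connected_silent hiso hT'
    obtain ⟨L, hlen, hout⟩ := hsolve _ (by omega) G hG
    obtain ⟨v, hv⟩ := hsil step L
    exact ⟨L v, lt_log_sixteen_add_one_of_lt_logb (by omega) (hlen v), hv ▸ hout v⟩
  choose lab hlab hout using hsilent
  obtain ⟨i, j, hij, heq⟩ := List.exists_ne_eq_of_length_lt lab hlab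
    (by simpa using two_pow_log_sixteen_add_one_le hn4096)
  have := (hout i).symm.trans (heq ▸ hout j)
  exact hij (Fin.ext (by omega))
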